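/- arXiv:2408.12051 — 7 statements merged into one kernel-verified Lean document; each statement's English description precedes it below -/
import Mathlib

section
/- The map ε : ℝ → (0,1), ε(y) = 1/√(eʸ + 1), is a group isomorphism from (ℝ, +) to ((0,1), ⋆). -/
/-- The scalar star operation `p ⋆ q = pq / √(p²q² + (1-p²)(1-q²))`. -/
noncomputable def sstar (p q : ℝ) : ℝ :=
  p * q / Real.sqrt (p ^ 2 * q ^ 2 + (1 - p ^ 2) * (1 - q ^ 2))

/-!
Writing `p = 1/√(t+1)` with `t > 0` turns `⋆` into multiplication of the parameters `t`:
`p² = 1/(t+1)` and `1 - p² = t/(t+1)`, so the radicand of `p ⋆ q` is `(ts+1)/((t+1)(s+1))`.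
Since `t = 1/p² - 1` recovers the parameter, this is an isomorphism `((0,∞), ·) ≅ ((0,1), ⋆)`,
and `ε` is its composition with `exp`.
-/

open Real Set

lemma one_div_sqrt_add_one_mem_Ioo {t : ℝ} (ht : 0 < t) : 1 / √(t + 1) ∈ Ioo (0 : ℝ) 1 := by
  have h1 : 1 < √(t + 1) := by
    rw [lt_sqrt zero_le_one]
    linarith
  exact ⟨by positivity, (div_lt_one (by linarith)).mpr h1⟩

lemma sq_one_div_sqrt {t : ℝ} (ht : 0 ≤ t) : (1 / √t) ^ 2 = 1 / t := by
  rw [div_pow, one_pow, sq_sqrt ht]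

lemma one_div_sqrt_one_div_sq_sub_one_add_one {p : ℝ} (hp : 0 < p) :
    1 / √(1 / p ^ 2 - 1 + 1) = p := by
  rw [sub_add_cancel, one_div (p ^ 2), ← inv_pow, sqrt_sq (by positivity), one_div, inv_inv]

lemma sstar_one_div_sqrt_add_one {t s : ℝ} (ht : 0 ≤ t) (hs : 0 ≤ s) :
    sstar (1 / √(t + 1)) (1 / √(s + 1)) = 1 / √(t * s + 1) := by
  have hradicand : 1 / (t + 1) * (1 / (s + 1)) + (1 - 1 / (t + 1)) * (1 - 1 / (s + 1))
      = (t * s + 1) / ((t + 1) * (s + 1)) := by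
    field_simp
    ring
  rw [sstar, sq_one_div_sqrt (by linarith), sq_one_div_sqrt (by linarith), hradicand,
    sqrt_div' _ (by positivity), sqrt_mul (by linarith)]
  have : 0 < √(t + 1) := sqrt_pos.mpr (by linarith)
  have : 0 < √(s + 1) := sqrt_pos.mpr (by linarith)
  have : 0 < √(t * s + 1) := sqrt_pos.mpr (by positivity)
  field_simp

noncomputable def epsilon (y : ℝ) : ℝ := 1 / √(exp y + 1)

noncomputable def epsilonInv (p : ℝ) : ℝ := log (1 / p ^ 2 - 1)

lemma epsilon_mem_Ioo (y : ℝ) : epsilon y ∈ Ioo (0 : ℝ) 1 :=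
  one_div_sqrt_add_one_mem_Ioo (exp_pos y)

lemma epsilonInv_epsilon : Function.LeftInverse epsilonInv epsilon := by
  intro y
  rw [epsilonInv, epsilon, sq_one_div_sqrt (by positivity), one_div_one_div, add_sub_cancel_right,
    log_exp]

lemma epsilon_epsilonInv {p : ℝ} (hp : p ∈ Ioo (0 : ℝ) 1) : epsilon (epsilonInv p) = p := by
  have hp2 : p ^ 2 < 1 := by nlinarith [hp.1, hp.2]
  have hpos : 0 < 1 / p ^ 2 - 1 := by
    rw [sub_pos, lt_div_iff₀ (by positivity [hp.1]), one_mul]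
    exact hp2
  rw [epsilon, epsilonInv, exp_log hpos, one_div_sqrt_one_div_sq_sub_one_add_one hp.1]

lemma epsilon_add (x y : ℝ) : epsilon (x + y) = sstar (epsilon x) (epsilon y) := by
  rw [epsilon, epsilon, epsilon, exp_add,
    sstar_one_div_sqrt_add_one (exp_pos x).le (exp_pos y).le]

/-- The map `ε : ℝ → (0,1)`, `ε(y) = 1/√(eʸ + 1)`, is a group isomorphism from
`(ℝ,+)` onto `((0,1), ⋆)`: it lands in `(0,1)`, is injective, surjective onto
`(0,1)`, and turns addition into `⋆`. -/
theorem stmt_5 :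
    (∀ y : ℝ, 1 / Real.sqrt (Real.exp y + 1) ∈ Set.Ioo (0:ℝ) 1) ∧
    Function.Injective (fun y : ℝ => 1 / Real.sqrt (Real.exp y + 1)) ∧
    (∀ p : ℝ, p ∈ Set.Ioo (0:ℝ) 1 → ∃ y : ℝ, 1 / Real.sqrt (Real.exp y + 1) = p) ∧
    (∀ x y : ℝ, 1 / Real.sqrt (Real.exp (x + y) + 1)
      = sstar (1 / Real.sqrt (Real.exp x + 1)) (1 / Real.sqrt (Real.exp y + 1))) :=
  ⟨epsilon_mem_Ioo, epsilonInv_epsilon.injective,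
    fun _ hp => ⟨_, epsilon_epsilonInv hp⟩, epsilon_add⟩
end

section
/- For positive contractions P, Q on finite-dimensional Hilbert spaces satisfying the kernel condition, one has 0 ≤ P ⋆ Q ≤ id. -/
open Matrix Kronecker
open scoped ComplexOrder

/-!
Put `A = P ⊗ Q` and `C = (1 - P²) ⊗ (1 - Q²)`: commuting positive matrices with `R² = A² + C`.
If `R v = 0` then `A v = 0` and `C v = 0`; as `C = ((1 + P) ⊗ (1 + Q)) ((1 - P) ⊗ (1 - Q))` with
invertible first factor, the kernel condition makes `R` invertible. Now `R = √(A² + C)` commutes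
with `A`, and `A = √(A²) ≤ R` by operator monotonicity of the square root, so both `A R⁻¹` and
`1 - A R⁻¹ = (R - A) R⁻¹` are products of commuting positive elements, hence positive.
-/

lemma commute_one_sub_mul_self {R : Type*} [Ring R] (a : R) : Commute a (1 - a * a) :=
  (Commute.one_right a).sub_right ((Commute.refl a).mul_right (Commute.refl a))

section CStarAlgebra

variable {A : Type*} [CStarAlgebra A] [PartialOrder A] [StarOrderedRing A]

lemma one_sub_mul_self_nonneg {a : A} (ha : 0 ≤ a) (ha1 : a ≤ 1) : 0 ≤ 1 - a * a := by
  have h : 1 - a * a = (1 + a) * (1 - a) := by noncomm_ring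
  rw [h]
  exact Commute.mul_nonneg (add_nonneg zero_le_one ha) (sub_nonneg.mpr ha1)
    ((Commute.one_left _).add_left ((Commute.one_right a).sub_right (Commute.refl a)))

lemma Commute.sqrt_left {a b : A} (h : Commute a b) : Commute (CFC.sqrt a) b := by
  rw [CFC.sqrt_eq_cfc]
  exact h.cfc_nnreal _

lemma le_of_mul_self_eq_add {a c r : A} (ha : 0 ≤ a) (hc : 0 ≤ c) (hr : 0 ≤ r)
    (hr2 : r * r = a * a + c) : a ≤ r := by
  rw [← CFC.sqrt_mul_self a, ← CFC.sqrt_mul_self r, hr2]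
  exact CFC.sqrt_le_sqrt _ _ (le_add_of_nonneg_right hc)

lemma commute_of_mul_self_eq_add {a c r : A} (hac : Commute a c) (hr : 0 ≤ r)
    (hr2 : r * r = a * a + c) : Commute a r := by
  rw [← CFC.sqrt_mul_self r, hr2]
  exact (((Commute.refl a).mul_right (Commute.refl a)).add_right hac).symm.sqrt_left.symm

lemma mul_inv_mem_Icc_of_mul_self_eq_add {a c : A} {r : Aˣ} (ha : 0 ≤ a) (hc : 0 ≤ c)
    (hac : Commute a c) (hr : 0 ≤ (r : A)) (hr2 : (r : A) * r = a * a + c) :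
    a * ↑r⁻¹ ∈ Set.Icc 0 1 := by
  have har : Commute a r := commute_of_mul_self_eq_add hac hr hr2
  have hr_inv : 0 ≤ (↑r⁻¹ : A) := CFC.inv_nonneg_of_nonneg r hr
  refine ⟨har.units_inv_right.mul_nonneg ha hr_inv, sub_nonneg.mp ?_⟩
  have h : 1 - a * ↑r⁻¹ = (r - a) * ↑r⁻¹ := by rw [sub_mul, Units.mul_inv]
  rw [h]
  exact ((Commute.refl (r : A)).sub_left har).units_inv_right.mul_nonneg
    (sub_nonneg.mpr (le_of_mul_self_eq_add ha hc hr hr2)) hr_inv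

end CStarAlgebra

open scoped MatrixOrder Matrix.Norms.L2Operator

namespace Matrix

variable {ι κ : Type*} [Fintype ι] [Fintype κ]

lemma _root_.Commute.kronecker {R : Type*} [CommSemiring R] {a c : Matrix ι ι R}
    {b d : Matrix κ κ R} (hac : Commute a c) (hbd : Commute b d) :
    Commute (a ⊗ₖ b) (c ⊗ₖ d) := by
  rw [Commute, SemiconjBy, ← mul_kronecker_mul, ← mul_kronecker_mul, hac.eq, hbd.eq]

lemma PosSemidef.mulVec_eq_zero_of_add {𝕜 : Type*} [RCLike 𝕜] {M N : Matrix ι ι 𝕜}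
    (hM : M.PosSemidef) (hN : N.PosSemidef) {v : ι → 𝕜} (h : (M + N) *ᵥ v = 0) :
    M *ᵥ v = 0 := by
  have h0 := ((hM.add hN).dotProduct_mulVec_zero_iff v).mpr h
  rw [add_mulVec, dotProduct_add] at h0
  exact (hM.dotProduct_mulVec_zero_iff v).mp
    ((add_eq_zero_iff_of_nonneg (hM.dotProduct_mulVec_nonneg v)
      (hN.dotProduct_mulVec_nonneg v)).mp h0).1

variable [DecidableEq ι] [DecidableEq κ]

lemma PosSemidef.one_sub_mul_self {P : Matrix ι ι ℂ} (hP : P.PosSemidef)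
    (hP1 : (1 - P).PosSemidef) : (1 - P * P).PosSemidef :=
  nonneg_iff_posSemidef.mp <| one_sub_mul_self_nonneg (nonneg_iff_posSemidef.mpr hP) hP1

lemma mulVec_eq_zero_of_kronecker_sq_add {P : Matrix ι ι ℂ} {Q : Matrix κ κ ℂ}
    (hP : P.PosSemidef) (hP1 : (1 - P).PosSemidef) (hQ : Q.PosSemidef) (hQ1 : (1 - Q).PosSemidef)
    {v : ι × κ → ℂ} (h : ((P * P) ⊗ₖ (Q * Q) + (1 - P * P) ⊗ₖ (1 - Q * Q)) *ᵥ v = 0) :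
    (P ⊗ₖ Q) *ᵥ v = 0 ∧ ((1 - P) ⊗ₖ (1 - Q)) *ᵥ v = 0 := by
  have hC := hP.one_sub_mul_self hP1 |>.kronecker (hQ.one_sub_mul_self hQ1)
  have hAA : (P ⊗ₖ Q)ᴴ * (P ⊗ₖ Q) = (P * P) ⊗ₖ (Q * Q) := by
    rw [(hP.kronecker hQ).isHermitian.eq, mul_kronecker_mul]
  have hAA_psd : ((P * P) ⊗ₖ (Q * Q)).PosSemidef := hAA ▸ posSemidef_conjTranspose_mul_self _
  constructor
  · rw [← conjTranspose_mul_self_mulVec_eq_zero, hAA]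
    exact hAA_psd.mulVec_eq_zero_of_add hC h
  · have hT : IsUnit ((1 + P) ⊗ₖ (1 + Q)) :=
      (PosDef.one.add_posSemidef hP).kronecker (PosDef.one.add_posSemidef hQ) |>.isUnit
    have hC_eq : (1 - P * P) ⊗ₖ (1 - Q * Q) = ((1 + P) ⊗ₖ (1 + Q)) * ((1 - P) ⊗ₖ (1 - Q)) := by
      rw [← mul_kronecker_mul]; congr 1 <;> noncomm_ring
    apply mulVec_injective_iff_isUnit.mpr hT
    rw [mulVec_mulVec, ← hC_eq, mulVec_zero]
    rw [add_comm] at h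
    exact hC.mulVec_eq_zero_of_add hAA_psd h

lemma isUnit_of_mul_self_eq_kronecker_sq_add {P : Matrix ι ι ℂ} {Q : Matrix κ κ ℂ}
    (hP : P.PosSemidef) (hP1 : (1 - P).PosSemidef) (hQ : Q.PosSemidef) (hQ1 : (1 - Q).PosSemidef)
    (hker : ∀ v : ι × κ → ℂ, (P ⊗ₖ Q) *ᵥ v = 0 → ((1 - P) ⊗ₖ (1 - Q)) *ᵥ v = 0 → v = 0)
    {R : Matrix (ι × κ) (ι × κ) ℂ}
    (hR : R * R = (P * P) ⊗ₖ (Q * Q) + (1 - P * P) ⊗ₖ (1 - Q * Q)) : IsUnit R := by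
  refine mulVec_injective_iff_isUnit.mp fun v w hvw => sub_eq_zero.mp ?_
  have h : (R * R) *ᵥ (v - w) = 0 := by
    rw [← mulVec_mulVec, mulVec_sub, hvw, sub_self, mulVec_zero]
  rw [hR] at h
  exact hker _ (mulVec_eq_zero_of_kronecker_sq_add hP hP1 hQ hQ1 h).1
    (mulVec_eq_zero_of_kronecker_sq_add hP hP1 hQ hQ1 h).2

end Matrix

/-- For positive contractions `P, Q` on finite-dimensional Hilbert spaces
satisfying the kernel condition, one has `0 ≤ P ⋆ Q ≤ id`, where
`P ⋆ Q = (P ⊗ Q)(P² ⊗ Q² + (id−P²) ⊗ (id−Q²))^{-1/2}`. -/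
theorem stmt_11 {m n : ℕ} (P : Matrix (Fin m) (Fin m) ℂ) (Q : Matrix (Fin n) (Fin n) ℂ)
    (hP : P.PosSemidef) (hP1 : (1 - P).PosSemidef)
    (hQ : Q.PosSemidef) (hQ1 : (1 - Q).PosSemidef)
    (hker : ∀ v : Fin m × Fin n → ℂ,
      (P ⊗ₖ Q).mulVec v = 0 → ((1 - P) ⊗ₖ (1 - Q)).mulVec v = 0 → v = 0)
    (R : Matrix (Fin m × Fin n) (Fin m × Fin n) ℂ)
    (hR1 : R.PosSemidef)
    (hR2 : R * R = (P * P) ⊗ₖ (Q * Q) + (1 - P * P) ⊗ₖ (1 - Q * Q)) :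
    ((P ⊗ₖ Q) * R⁻¹).PosSemidef ∧ (1 - (P ⊗ₖ Q) * R⁻¹).PosSemidef := by
  obtain ⟨u, rfl⟩ := isUnit_of_mul_self_eq_kronecker_sq_add hP hP1 hQ hQ1 hker hR2
  have hAC : Commute (P ⊗ₖ Q) ((1 - P * P) ⊗ₖ (1 - Q * Q)) :=
    (commute_one_sub_mul_self P).kronecker (commute_one_sub_mul_self Q)
  rw [← coe_units_inv, ← nonneg_iff_posSemidef, ← le_iff]
  exact mul_inv_mem_Icc_of_mul_self_eq_add (nonneg_iff_posSemidef.mpr (hP.kronecker hQ))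
    (nonneg_iff_posSemidef.mpr ((hP.one_sub_mul_self hP1).kronecker (hQ.one_sub_mul_self hQ1)))
    hAC (nonneg_iff_posSemidef.mpr hR1) (by rw [hR2, mul_kronecker_mul])
end

section
/- Writing P₀ := √(id − P²) for a positive contraction P, one has (P ⋆ Q)₀ = P₀ ⋆ Q₀, i.e., id − (P⋆Q)² = (P₀ ⋆ Q₀)². -/
open Matrix Kronecker
open scoped ComplexOrder MatrixOrder

/-!
`P ⊗ Q` and `P₀ ⊗ Q₀` commute (`P₀` is a function of `P`), hence both commute with the positive
square root `R` of `(P ⊗ Q)² + (P₀ ⊗ Q₀)²`. The kernel condition makes `R` invertible: a vector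
killed by `R` is killed by `P ⊗ Q` and by `(id - P²) ⊗ (id - Q²)`, and `(id + P) ⊗ (id + Q)`
carries it into `ker (P ⊗ Q) ∩ ker ((id - P) ⊗ (id - Q))`. The identity is then
`R² R⁻² = ((P ⊗ Q)² + (P₀ ⊗ Q₀)²) R⁻²`.
-/

theorem Units.one_sub_mul_inv_mul_self {α : Type*} [Ring α] {S T : α} {u : αˣ}
    (hS : Commute S u) (hT : Commute T u) (h : (u * u : α) = S * S + T * T) :
    1 - (S * ↑u⁻¹) * (S * ↑u⁻¹) = (T * ↑u⁻¹) * (T * ↑u⁻¹) := by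
  have one_eq : (1 : α) = (u * u : α) * ↑u⁻¹ * ↑u⁻¹ := by
    rw [mul_assoc (u : α), Units.mul_inv, mul_one, Units.mul_inv]
  rw [one_eq, h, sub_eq_iff_eq_add]
  simp only [add_mul, mul_assoc, hS.units_inv_right.left_comm, hT.units_inv_right.left_comm]
  abel

section

variable {𝕜 k l : Type*} [RCLike 𝕜] [Fintype k] [Fintype l]

theorem Matrix.PosSemidef.mulVec_eq_zero_of_add_mulVec_eq_zero {A B : Matrix k k 𝕜}
    (hA : A.PosSemidef) (hB : B.PosSemidef) {v : k → 𝕜} (h : (A + B) *ᵥ v = 0) :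
    A *ᵥ v = 0 ∧ B *ᵥ v = 0 := by
  have hsum : star v ⬝ᵥ A *ᵥ v + star v ⬝ᵥ B *ᵥ v = 0 := by
    rw [← dotProduct_add, ← add_mulVec, h, dotProduct_zero]
  obtain ⟨hAv, hBv⟩ := (add_eq_zero_iff_of_nonneg (hA.dotProduct_mulVec_nonneg v)
    (hB.dotProduct_mulVec_nonneg v)).mp hsum
  exact ⟨(hA.dotProduct_mulVec_zero_iff v).mp hAv, (hB.dotProduct_mulVec_zero_iff v).mp hBv⟩

variable [DecidableEq k] [DecidableEq l]

theorem Matrix.PosSemidef.commute_of_commute_mul_self {A B : Matrix k k 𝕜} (hA : A.PosSemidef)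
    (h : Commute B (A * A)) : Commute B A := by
  rw [← CFC.sqrt_mul_self A hA.nonneg, CFC.sqrt_eq_cfc]
  exact (h.symm.cfc_nnreal _).symm

theorem Matrix.isUnit_of_mul_self_eq_add {R A B : Matrix k k 𝕜} (hA : A.PosSemidef)
    (hB : B.PosSemidef) (h : R * R = A + B)
    (hker : ∀ v, A *ᵥ v = 0 → B *ᵥ v = 0 → v = 0) : IsUnit R := by
  rw [isUnit_iff_isUnit_det, isUnit_iff_ne_zero]
  intro hdet
  obtain ⟨v, hv, hRv⟩ := exists_mulVec_eq_zero_iff.mpr hdet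
  have hRRv : (A + B) *ᵥ v = 0 := by rw [← h, ← mulVec_mulVec, hRv, mulVec_zero]
  obtain ⟨hAv, hBv⟩ := hA.mulVec_eq_zero_of_add_mulVec_eq_zero hB hRRv
  exact hv (hker v hAv hBv)

theorem Matrix.eq_zero_of_kronecker_mulVec_eq_zero {P : Matrix k k 𝕜} {Q : Matrix l l 𝕜}
    (hP : P.PosSemidef) (hQ : Q.PosSemidef)
    (hker : ∀ v, (P ⊗ₖ Q) *ᵥ v = 0 → ((1 - P) ⊗ₖ (1 - Q)) *ᵥ v = 0 → v = 0)
    {v : k × l → 𝕜} (h₁ : ((P * P) ⊗ₖ (Q * Q)) *ᵥ v = 0)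
    (h₂ : ((1 - P * P) ⊗ₖ (1 - Q * Q)) *ᵥ v = 0) : v = 0 := by
  set K := (1 + P) ⊗ₖ (1 + Q)
  have hK : IsUnit K :=
    ((PosDef.one.add_posSemidef hP).kronecker (PosDef.one.add_posSemidef hQ)).isUnit
  have hSv : (P ⊗ₖ Q) *ᵥ v = 0 := by
    rw [← conjTranspose_mul_self_mulVec_eq_zero, (hP.kronecker hQ).isHermitian.eq,
      ← mul_kronecker_mul, h₁]
  have hSK : (P ⊗ₖ Q) * K = K * (P ⊗ₖ Q) := by
    simp only [K, ← mul_kronecker_mul, mul_add, add_mul, mul_one, one_mul]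
  have hTK : ((1 - P) ⊗ₖ (1 - Q)) * K = (1 - P * P) ⊗ₖ (1 - Q * Q) := by
    rw [← mul_kronecker_mul]
    congr 1 <;> noncomm_ring
  have hKv : K *ᵥ v = 0 :=
    hker _ (by rw [mulVec_mulVec, hSK, ← mulVec_mulVec, hSv, mulVec_zero])
      (by rw [mulVec_mulVec, hTK, h₂])
  exact mulVec_injective_iff_isUnit.mpr hK (hKv.trans (mulVec_zero K).symm)

theorem Matrix.PosSemidef.commute_of_mul_self_eq_one_sub {P P₀ : Matrix k k 𝕜}
    (hP₀ : P₀.PosSemidef) (h : P₀ * P₀ = 1 - P * P) : Commute P P₀ :=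
  hP₀.commute_of_commute_mul_self <| h ▸ (Commute.one_right P).sub_right ((Commute.refl P).mul_right (.refl P))

end

theorem stmt_12_general {m n : ℕ} (P : Matrix (Fin m) (Fin m) ℂ) (Q : Matrix (Fin n) (Fin n) ℂ)
    (hP : P.PosSemidef) (hQ : Q.PosSemidef)
    (hker : ∀ v : Fin m × Fin n → ℂ,
      (P ⊗ₖ Q).mulVec v = 0 → ((1 - P) ⊗ₖ (1 - Q)).mulVec v = 0 → v = 0)
    (P0 : Matrix (Fin m) (Fin m) ℂ) (hP0 : P0.PosSemidef) (hP0sq : P0 * P0 = 1 - P * P)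
    (Q0 : Matrix (Fin n) (Fin n) ℂ) (hQ0 : Q0.PosSemidef) (hQ0sq : Q0 * Q0 = 1 - Q * Q)
    (R : Matrix (Fin m × Fin n) (Fin m × Fin n) ℂ)
    (hR1 : R.PosSemidef)
    (hR2 : R * R = (P * P) ⊗ₖ (Q * Q) + (P0 * P0) ⊗ₖ (Q0 * Q0)) :
    1 - ((P ⊗ₖ Q) * R⁻¹) * ((P ⊗ₖ Q) * R⁻¹)
      = ((P0 ⊗ₖ Q0) * R⁻¹) * ((P0 ⊗ₖ Q0) * R⁻¹) := by
  have hRR : R * R = (P ⊗ₖ Q) * (P ⊗ₖ Q) + (P0 ⊗ₖ Q0) * (P0 ⊗ₖ Q0) := by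
    rw [hR2, mul_kronecker_mul, mul_kronecker_mul]
  have hST : Commute (P ⊗ₖ Q) (P0 ⊗ₖ Q0) := by
    rw [Commute, SemiconjBy, ← mul_kronecker_mul, ← mul_kronecker_mul,
      (hP0.commute_of_mul_self_eq_one_sub hP0sq).eq, (hQ0.commute_of_mul_self_eq_one_sub hQ0sq).eq]
  have hSR : Commute (P ⊗ₖ Q) R := by
    refine hR1.commute_of_commute_mul_self ?_
    rw [hRR]
    exact ((Commute.refl _).mul_right (.refl _)).add_right (hST.mul_right hST)
  have hTR : Commute (P0 ⊗ₖ Q0) R := by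
    refine hR1.commute_of_commute_mul_self ?_
    rw [hRR]
    exact (hST.symm.mul_right hST.symm).add_right ((Commute.refl _).mul_right (.refl _))
  have hRunit : IsUnit R :=
    isUnit_of_mul_self_eq_add ((sq P ▸ hP.pow 2).kronecker (sq Q ▸ hQ.pow 2))
      ((sq P0 ▸ hP0.pow 2).kronecker (sq Q0 ▸ hQ0.pow 2)) hR2 fun _ h₁ h₂ ↦
        eq_zero_of_kronecker_mulVec_eq_zero hP hQ hker h₁ (by rwa [← hP0sq, ← hQ0sq])
  obtain ⟨u, rfl⟩ := hRunit
  rw [← coe_units_inv]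
  exact Units.one_sub_mul_inv_mul_self hSR hTR hRR

/-- Writing `P₀ := √(id − P²)` for a positive contraction `P`, one has
`(P ⋆ Q)₀ = P₀ ⋆ Q₀`, i.e. `id − (P ⋆ Q)² = (P₀ ⋆ Q₀)²`, where
`P ⋆ Q = (P ⊗ Q)(P² ⊗ Q² + P₀² ⊗ Q₀²)^{-1/2}` (note the denominators of
`P ⋆ Q` and `P₀ ⋆ Q₀` agree). -/
theorem stmt_12 {m n : ℕ} (P : Matrix (Fin m) (Fin m) ℂ) (Q : Matrix (Fin n) (Fin n) ℂ)
    (hP : P.PosSemidef) (hP1 : (1 - P).PosSemidef)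
    (hQ : Q.PosSemidef) (hQ1 : (1 - Q).PosSemidef)
    (hker : ∀ v : Fin m × Fin n → ℂ,
      (P ⊗ₖ Q).mulVec v = 0 → ((1 - P) ⊗ₖ (1 - Q)).mulVec v = 0 → v = 0)
    (P0 : Matrix (Fin m) (Fin m) ℂ) (hP0 : P0.PosSemidef) (hP0sq : P0 * P0 = 1 - P * P)
    (Q0 : Matrix (Fin n) (Fin n) ℂ) (hQ0 : Q0.PosSemidef) (hQ0sq : Q0 * Q0 = 1 - Q * Q)
    (R : Matrix (Fin m × Fin n) (Fin m × Fin n) ℂ)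
    (hR1 : R.PosSemidef)
    (hR2 : R * R = (P * P) ⊗ₖ (Q * Q) + (P0 * P0) ⊗ₖ (Q0 * Q0)) :
    1 - ((P ⊗ₖ Q) * R⁻¹) * ((P ⊗ₖ Q) * R⁻¹)
      = ((P0 ⊗ₖ Q0) * R⁻¹) * ((P0 ⊗ₖ Q0) * R⁻¹) :=
  stmt_12_general P Q hP hQ hker P0 hP0 hP0sq Q0 hQ0 hQ0sq R hR1 hR2
end

section
/- Let m = (A,B,H) be a finite-dimensional P-module with A normal and B invertible. If p is an orthogonal projection on H with Ap = pAp and Bp = pBp, then pA = Ap and pB = Bp. Consequently the orthogonal complement of any A,B-invariant subspace is again A,B-invariant. -/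
open ContinuousLinearMap

/-!
A normal operator `A` that leaves the range of an orthogonal projection `p` invariant also
leaves it invariant under `A†`: the defect `y = A† p - p A† p` satisfies
`y† y = (A p)† (A p) - (A p) (A p)†`, a commutator, so `y† y` has trace zero and `y = 0`.
The operators leaving the range of `p` invariant form a finite-dimensional algebra, which therefore
contains `B⁻¹` together with `B`, and hence `B† = B⁻¹ - A† A B⁻¹`. An operator leaving the range
of `p` invariant together with its adjoint commutes with `p`, hence also preserves `ker p`.
-/

namespace IsIdempotentElem

variable (𝕜 : Type*) {R : Type*} [CommSemiring 𝕜] [Semiring R] [Algebra 𝕜 R] {p : R}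

-- `x * p = p * x * p` says that `x` maps the range of `p` into itself.
def stabilizer (hp : IsIdempotentElem p) : Subalgebra 𝕜 R where
  carrier := {x | x * p = p * x * p}
  mul_mem' {x y} (hx : x * p = p * x * p) (hy : y * p = p * y * p) :=
    calc x * y * p = x * (p * y * p) := by rw [mul_assoc, hy]
      _ = x * p * y * p := by simp only [mul_assoc]
      _ = p * x * (p * y * p) := by rw [hx]; simp only [mul_assoc]
      _ = p * (x * y) * p := by rw [← hy]; simp only [mul_assoc]
  add_mem' {x y} (hx : x * p = p * x * p) (hy : y * p = p * y * p) :=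
    show (x + y) * p = p * (x + y) * p by rw [add_mul, hx, hy, mul_add, add_mul]
  algebraMap_mem' c := by
    show _ * p = p * _ * p
    rw [← Algebra.commutes, mul_assoc, hp.eq]

variable {𝕜}

@[simp]
theorem mem_stabilizer (hp : IsIdempotentElem p) {x : R} :
    x ∈ hp.stabilizer 𝕜 ↔ x * p = p * x * p :=
  Iff.rfl

end IsIdempotentElem

theorem Subalgebra.val_inv_mem {𝕜 R : Type*} [Field 𝕜] [Ring R] [Algebra 𝕜 R]
    [FiniteDimensional 𝕜 R] (S : Subalgebra 𝕜 R) {u : Rˣ} (hu : (u : R) ∈ S) :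
    ((u⁻¹ : Rˣ) : R) ∈ S := by
  have hinj : Function.Injective (LinearMap.mulLeft 𝕜 (⟨u, hu⟩ : S)) := fun s t hst =>
    Subtype.ext <| u.isUnit.mul_left_cancel (congrArg Subtype.val hst)
  obtain ⟨s, hs⟩ := LinearMap.injective_iff_surjective.mp hinj 1
  rw [u.inv_eq_of_mul_eq_one_right (congrArg Subtype.val hs)]
  exact s.2

namespace IsStarProjection

variable {R : Type*} [Ring R] [StarRing R] {p : R}

theorem commute_of_mem_stabilizer {𝕜 : Type*} [CommSemiring 𝕜] [Algebra 𝕜 R]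
    (hp : IsStarProjection p) {x : R} (hx : x ∈ hp.isIdempotentElem.stabilizer 𝕜)
    (hx' : star x ∈ hp.isIdempotentElem.stabilizer 𝕜) : Commute p x := by
  rw [IsIdempotentElem.mem_stabilizer] at hx hx'
  have hpx := congrArg star hx'
  simp only [star_mul, star_star, hp.isSelfAdjoint.star_eq, ← mul_assoc] at hpx
  rw [Commute, SemiconjBy, hpx, hx]

theorem star_mul_self_defect_eq {a : R} [IsStarNormal a] (hp : IsStarProjection p)
    (ha : a * p = p * a * p) :
    star (star a * p - p * star a * p) * (star a * p - p * star a * p)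
      = star (a * p) * (a * p) - a * p * star (a * p) := by
  have hps : star p = p := hp.isSelfAdjoint.star_eq
  have hpp (z : R) : p * (p * z) = p * z := by rw [← mul_assoc, hp.isIdempotentElem.eq]
  have hap (z : R) : p * (a * (p * z)) = a * (p * z) := by
    rw [← mul_assoc, ← mul_assoc, ← ha, mul_assoc]
  have hpa : p * (star a * p) = p * star a := by
    simpa only [star_mul, hps, mul_assoc] using (congrArg star ha).symm
  have hn (z : R) : star a * (a * z) = a * (star a * z) := by
    rw [← mul_assoc, star_comm_self', mul_assoc]
  simp only [star_sub, star_mul, hps, star_star, sub_mul, mul_sub, mul_assoc, hpp, hap, hn, hpa]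
  abel

end IsStarProjection

theorem Subalgebra.star_mem_of_star_mul_add_star_mul_eq_one {𝕜 R : Type*} [Field 𝕜] [Ring R]
    [StarRing R] [Algebra 𝕜 R] [FiniteDimensional 𝕜 R] (S : Subalgebra 𝕜 R) {a : R} {u : Rˣ}
    (h : star a * a + star (u : R) * u = 1) (ha : a ∈ S) (ha' : star a ∈ S) (hu : (u : R) ∈ S) :
    star (u : R) ∈ S := by
  have hstar : star (u : R) = ↑u⁻¹ - star a * a * ↑u⁻¹ := by
    rw [eq_sub_iff_add_eq']
    simpa only [add_mul, mul_assoc, u.mul_inv, mul_one, one_mul] using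
      congrArg (· * (↑u⁻¹ : R)) h
  have hu' := S.val_inv_mem hu
  rw [hstar]
  exact sub_mem hu' (mul_mem (mul_mem ha' ha) hu')

section Operator

variable {𝕜 E : Type*} [RCLike 𝕜] [NormedAddCommGroup E] [InnerProductSpace 𝕜 E]

theorem Submodule.comp_starProjection_eq_of_forall_mem (K : Submodule 𝕜 E)
    [K.HasOrthogonalProjection] {T : E →L[𝕜] E} (hT : ∀ x ∈ K, T x ∈ K) :
    T ∘L K.starProjection = K.starProjection ∘L (T ∘L K.starProjection) := by
  ext x
  exact (starProjection_eq_self_iff.mpr (hT _ (K.starProjection_apply_mem x))).symm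

theorem Submodule.apply_mem_orthogonal_of_comp_starProjection (K : Submodule 𝕜 E)
    [K.HasOrthogonalProjection] {T : E →L[𝕜] E}
    (hT : K.starProjection ∘L T = T ∘L K.starProjection) {x : E} (hx : x ∈ Kᗮ) : T x ∈ Kᗮ := by
  rw [← starProjection_apply_eq_zero_iff] at hx ⊢
  rw [← comp_apply, hT, comp_apply, hx, map_zero]

variable [FiniteDimensional 𝕜 E]

theorem LinearMap.IsPositive.trace_eq_zero_iff {f : E →ₗ[𝕜] E} (hf : f.IsPositive) :
    f.trace 𝕜 E = 0 ↔ f = 0 := by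
  let b := stdOrthonormalBasis 𝕜 E
  rw [trace_eq_matrix_trace 𝕜 b.toBasis, ((posSemidef_toMatrix_iff b).mpr hf).trace_eq_zero_iff,
    LinearEquiv.map_eq_zero_iff]

variable [CompleteSpace E]

theorem ContinuousLinearMap.eq_zero_of_trace_star_mul_self {T : E →L[𝕜] E}
    (h : LinearMap.trace 𝕜 E ↑(star T * T) = 0) : T = 0 :=
  adjoint_comp_self_eq_zero_iff.mp <| coe_injective <|
    (isPositive_adjoint_comp_self T).toLinearMap.trace_eq_zero_iff.mp h

theorem IsStarProjection.star_mem_stabilizer_of_isStarNormal {a p : E →L[𝕜] E} [IsStarNormal a]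
    (hp : IsStarProjection p) (ha : a ∈ hp.isIdempotentElem.stabilizer 𝕜) :
    star a ∈ hp.isIdempotentElem.stabilizer 𝕜 := by
  have hdefect : star a * p - p * star a * p = 0 := by
    apply eq_zero_of_trace_star_mul_self
    rw [hp.star_mul_self_defect_eq ha, toLinearMap_sub, map_sub, toLinearMap_mul (star _),
      toLinearMap_mul (a * p), LinearMap.trace_mul_comm, sub_self]
  exact sub_eq_zero.mp hdefect

end Operator

/-- Let `(A,B,H)` be a finite-dimensional P-module with `A` normal and `B`
invertible. If `p` is an orthogonal projection with `Ap = pAp` and `Bp = pBp`,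
then `pA = Ap` and `pB = Bp`. Consequently the orthogonal complement of any
`A,B`-invariant subspace is again `A,B`-invariant. -/
theorem stmt_13 {H : Type*} [NormedAddCommGroup H] [InnerProductSpace ℂ H]
    [FiniteDimensional ℂ H] (A B : H →L[ℂ] H)
    (hpyth : (adjoint A) ∘L A + (adjoint B) ∘L B = ContinuousLinearMap.id ℂ H)
    (hA : (adjoint A) ∘L A = A ∘L (adjoint A))
    (hB : IsUnit B) :
    (∀ p : H →L[ℂ] H, adjoint p = p → p ∘L p = p →
      A ∘L p = p ∘L (A ∘L p) → B ∘L p = p ∘L (B ∘L p) →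
      p ∘L A = A ∘L p ∧ p ∘L B = B ∘L p) ∧
    (∀ K : Submodule ℂ H, (∀ x ∈ K, A x ∈ K) → (∀ x ∈ K, B x ∈ K) →
      ∀ x ∈ Kᗮ, A x ∈ Kᗮ ∧ B x ∈ Kᗮ) := by
  have : IsStarNormal A := ⟨hA⟩
  obtain ⟨u, rfl⟩ := hB
  have reducing : ∀ p : H →L[ℂ] H, adjoint p = p → p ∘L p = p →
      A ∘L p = p ∘L (A ∘L p) → ↑u ∘L p = p ∘L (↑u ∘L p) →
      p ∘L A = A ∘L p ∧ p ∘L ↑u = ↑u ∘L p := by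
    intro p hp_adj hp_idem hAp hup
    have hp : IsStarProjection p := ⟨hp_idem, hp_adj⟩
    have hA_mem : A ∈ hp.isIdempotentElem.stabilizer ℂ := hAp.trans (mul_assoc p A p).symm
    have hu_mem : (u : H →L[ℂ] H) ∈ hp.isIdempotentElem.stabilizer ℂ :=
      hup.trans (mul_assoc p _ p).symm
    have hA_star := hp.star_mem_stabilizer_of_isStarNormal hA_mem
    have hu_star := (hp.isIdempotentElem.stabilizer ℂ).star_mem_of_star_mul_add_star_mul_eq_one
      hpyth hA_mem hA_star hu_mem
    exact ⟨(hp.commute_of_mem_stabilizer hA_mem hA_star).eq,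
      (hp.commute_of_mem_stabilizer hu_mem hu_star).eq⟩
  refine ⟨reducing, fun K hAK huK x hx => ?_⟩
  obtain ⟨hA_comm, hu_comm⟩ := reducing K.starProjection
    (isSelfAdjoint_starProjection K).adjoint_eq K.isIdempotentElem_starProjection
    (K.comp_starProjection_eq_of_forall_mem hAK) (K.comp_starProjection_eq_of_forall_mem huK)
  exact ⟨K.apply_mem_orthogonal_of_comp_starProjection hA_comm hx,
    K.apply_mem_orthogonal_of_comp_starProjection hu_comm hx⟩
end

section
/- Let (A,B,H) be a finite-dimensional P-module with A and B both invertible. Then the operator norms satisfy ‖A‖ < 1 and ‖B‖ < 1, and consequently for every infinite sequence (Cₙ) with each Cₙ ∈ {A,B}, the products Cₙ⋯C₁ converge to 0 in norm. -/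
open ContinuousLinearMap

/-- The word `Cₙ ⋯ C₁` of length `n` in the letters `C`. -/
def wordProd {M : Type*} [Monoid M] (C : ℕ → M) : ℕ → M
  | 0 => 1
  | n + 1 => C n * wordProd C n

/-!
Evaluating `A*A + B*B = 1` on `x` against `x` gives `‖A x‖² + ‖B x‖² = ‖x‖²`. If `B` is
invertible then `‖x‖ ≤ c ‖B x‖` with `c = ‖B⁻¹‖`, so `‖B x‖² ≥ ‖x‖² / (1 + c²)` and what is
left for `A` gives `‖A‖² ≤ c² / (1 + c²) < 1`. Symmetrically `‖B‖ < 1`, and a word of length `n`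
in `A` and `B` has norm at most `max ‖A‖ ‖B‖ ^ n`.
-/

theorem ContinuousLinearMap.opNorm_le_sqrt_of_norm_sq_le {𝕜 E F : Type*}
    [NontriviallyNormedField 𝕜] [SeminormedAddCommGroup E] [SeminormedAddCommGroup F]
    [NormedSpace 𝕜 E] [NormedSpace 𝕜 F] {f : E →L[𝕜] F} {k : ℝ} (hk : 0 ≤ k)
    (h : ∀ x, ‖f x‖ ^ 2 ≤ k * ‖x‖ ^ 2) : ‖f‖ ≤ √k :=
  opNorm_le_bound _ (Real.sqrt_nonneg k) fun x => by
    rw [← pow_le_pow_iff_left₀ (norm_nonneg _) (by positivity) two_ne_zero, mul_pow,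
      Real.sq_sqrt hk]
    exact h x

section Pythagorean

variable {𝕜 H : Type*} [RCLike 𝕜] [NormedAddCommGroup H] [InnerProductSpace 𝕜 H] [CompleteSpace H]
  {A B : H →L[𝕜] H}

theorem norm_sq_add_norm_sq_eq_of_adjoint_comp_add
    (hpyth : adjoint A ∘L A + adjoint B ∘L B = ContinuousLinearMap.id 𝕜 H) (x : H) :
    ‖A x‖ ^ 2 + ‖B x‖ ^ 2 = ‖x‖ ^ 2 := by
  have h := congrArg (fun T : H →L[𝕜] H => inner 𝕜 (T x) x) hpyth
  simp only [add_apply, comp_apply, id_apply, inner_add_left, adjoint_inner_left,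
    inner_self_eq_norm_sq_to_K] at h
  exact_mod_cast h

theorem norm_lt_one_of_adjoint_comp_add_of_isUnit
    (hpyth : adjoint A ∘L A + adjoint B ∘L B = ContinuousLinearMap.id 𝕜 H) (hB : IsUnit B) :
    ‖A‖ < 1 := by
  obtain ⟨u, rfl⟩ := hB
  set c := ‖(↑u⁻¹ : H →L[𝕜] H)‖
  have hlow (x : H) : ‖x‖ ≤ c * ‖(u : H →L[𝕜] H) x‖ :=
    calc ‖x‖ = ‖(↑u⁻¹ : H →L[𝕜] H) ((u : H →L[𝕜] H) x)‖ :=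
          congrArg _ ((ContinuousLinearEquiv.unitsEquiv 𝕜 H u).symm_apply_apply x).symm
      _ ≤ c * ‖(u : H →L[𝕜] H) x‖ := le_opNorm _ _
  have hsq (x : H) : ‖A x‖ ^ 2 ≤ c ^ 2 / (1 + c ^ 2) * ‖x‖ ^ 2 := by
    have hsum := norm_sq_add_norm_sq_eq_of_adjoint_comp_add hpyth x
    have hlow_sq : ‖x‖ ^ 2 ≤ c ^ 2 * ‖(u : H →L[𝕜] H) x‖ ^ 2 := by
      rw [← mul_pow]; exact pow_le_pow_left₀ (norm_nonneg _) (hlow x) 2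
    rw [div_mul_eq_mul_div, le_div_iff₀ (by positivity)]
    nlinarith [sq_nonneg ‖(u : H →L[𝕜] H) x‖, sq_nonneg ‖A x‖]
  calc ‖A‖ ≤ √(c ^ 2 / (1 + c ^ 2)) := opNorm_le_sqrt_of_norm_sq_le (by positivity) hsq
    _ < 1 := by
      rw [Real.sqrt_lt' one_pos, one_pow, div_lt_one (by positivity)]
      linarith

end Pythagorean

theorem norm_wordProd_le {M : Type*} [SeminormedRing M] {C : ℕ → M} {r : ℝ}
    (hC : ∀ n, ‖C n‖ ≤ r) (n : ℕ) : ‖wordProd C n‖ ≤ ‖(1 : M)‖ * r ^ n := by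
  induction n with
  | zero => simp [wordProd]
  | succ n ih =>
    have hr : 0 ≤ r := (norm_nonneg _).trans (hC 0)
    calc ‖wordProd C (n + 1)‖ ≤ ‖C n‖ * ‖wordProd C n‖ := norm_mul_le _ _
      _ ≤ r * (‖(1 : M)‖ * r ^ n) := by gcongr; exact hC n
      _ = ‖(1 : M)‖ * r ^ (n + 1) := by ring

theorem tendsto_norm_wordProd_zero {M : Type*} [SeminormedRing M] {C : ℕ → M} {r : ℝ}
    (hC : ∀ n, ‖C n‖ ≤ r) (hr : r < 1) :
    Filter.Tendsto (fun n => ‖wordProd C n‖) Filter.atTop (nhds 0) := by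
  have hr₀ : 0 ≤ r := (norm_nonneg _).trans (hC 0)
  refine squeeze_zero (fun n => norm_nonneg _) (norm_wordProd_le hC) ?_
  simpa using (tendsto_pow_atTop_nhds_zero_of_lt_one hr₀ hr).const_mul ‖(1 : M)‖

/-- Let `(A,B,H)` be a finite-dimensional P-module with `A, B` invertible. Then
`‖A‖ < 1` and `‖B‖ < 1`, and every infinite product of `A`'s and `B`'s converges
to `0` in norm. -/
theorem stmt_14 {H : Type*} [NormedAddCommGroup H] [InnerProductSpace ℂ H]
    [FiniteDimensional ℂ H] (A B : H →L[ℂ] H)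
    (hpyth : (adjoint A) ∘L A + (adjoint B) ∘L B = ContinuousLinearMap.id ℂ H)
    (hA : IsUnit A) (hB : IsUnit B) :
    ‖A‖ < 1 ∧ ‖B‖ < 1 ∧
    ∀ C : ℕ → (H →L[ℂ] H), (∀ n, C n = A ∨ C n = B) →
      Filter.Tendsto (fun n => ‖wordProd C n‖) Filter.atTop (nhds 0) := by
  have hA₁ : ‖A‖ < 1 := norm_lt_one_of_adjoint_comp_add_of_isUnit hpyth hB
  have hB₁ : ‖B‖ < 1 :=
    norm_lt_one_of_adjoint_comp_add_of_isUnit (by rwa [add_comm] at hpyth) hA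
  refine ⟨hA₁, hB₁, fun C hC => tendsto_norm_wordProd_zero (r := max ‖A‖ ‖B‖) (fun n => ?_)
    (max_lt hA₁ hB₁)⟩
  rcases hC n with h | h <;> simp [h]
end

section
/- Consider the one-dimensional P-modules (a,b,ℂ) with a,b ∈ ℂ, |a|²+|b|²=1, a ≠ 0 ≠ b. The operation (a,b) ⊠ (ã,b̃) := (aã/k, bb̃/k) with k = √(|a|²|ã|² + |b|²|b̃|²) makes this set an abelian group with identity (1/√2, 1/√2) and inverse (a,b)⁻¹ = (|b|e^{−i·Arg(a)}, |a|e^{−i·Arg(b)}). -/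
/-!
`bop z w` is the coordinatewise product `z * w` in `ℂ × ℂ`, rescaled by a positive real onto the
unit sphere of the Euclidean norm. Normalisation forgets positive real factors, and such factors
pass through coordinatewise products, so normalising an intermediate product changes nothing:
associativity and commutativity are inherited from `ℂ × ℂ`. The identity is the normalisation of
`(1, 1)`, and `binv z` is the positive multiple `‖a‖‖b‖ • (a⁻¹, b⁻¹)` of the coordinatewise inverse.
-/

/-- The set of one-dimensional irreducible diffuse P-modules:
pairs `(a,b) ∈ ℂ²` with `|a|² + |b|² = 1` and `a ≠ 0 ≠ b`. -/
def IrrD (z : ℂ × ℂ) : Prop := ‖z.1‖ ^ 2 + ‖z.2‖ ^ 2 = 1 ∧ z.1 ≠ 0 ∧ z.2 ≠ 0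

/-- The tensor product `(a,b) ⊠ (ã,b̃) = (aã/k, bb̃/k)` with
`k = √(|a|²|ã|² + |b|²|b̃|²)`. -/
noncomputable def bop (z w : ℂ × ℂ) : ℂ × ℂ :=
  (z.1 * w.1 / (Real.sqrt (‖z.1‖ ^ 2 * ‖w.1‖ ^ 2 + ‖z.2‖ ^ 2 * ‖w.2‖ ^ 2) : ℝ),
   z.2 * w.2 / (Real.sqrt (‖z.1‖ ^ 2 * ‖w.1‖ ^ 2 + ‖z.2‖ ^ 2 * ‖w.2‖ ^ 2) : ℝ))

/-- The inverse `(a,b)⁻¹ = (|b| e^{-i Arg a}, |a| e^{-i Arg b})`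
(written via `e^{-i Arg a} = conj a / |a|`). -/
noncomputable def binv (z : ℂ × ℂ) : ℂ × ℂ :=
  ((‖z.2‖ : ℂ) * (starRingEnd ℂ z.1) / (‖z.1‖ : ℂ),
   (‖z.1‖ : ℂ) * (starRingEnd ℂ z.2) / (‖z.2‖ : ℂ))

namespace Prod

variable {𝕜 : Type*} [RCLike 𝕜]

/-- Needed because `‖v‖` on `𝕜 × 𝕜` is the sup norm. -/
def euclidNormSq (v : 𝕜 × 𝕜) : ℝ := ‖v.1‖ ^ 2 + ‖v.2‖ ^ 2

/-- `v / ‖v‖₂`, with the junk value `0` at `v = 0`. -/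
noncomputable def euclidNormalize (v : 𝕜 × 𝕜) : 𝕜 × 𝕜 := (√(euclidNormSq v))⁻¹ • v

theorem euclidNormSq_smul (r : ℝ) (v : 𝕜 × 𝕜) : euclidNormSq (r • v) = r ^ 2 * euclidNormSq v := by
  simp only [euclidNormSq, smul_fst, smul_snd, norm_smul, Real.norm_eq_abs, mul_pow, sq_abs]
  ring

theorem euclidNormSq_pos {v : 𝕜 × 𝕜} (hv : v ≠ 0) : 0 < euclidNormSq v := by
  rcases ne_or_eq v.1 0 with h | h
  · have := pow_pos (norm_pos_iff.mpr h) 2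
    unfold euclidNormSq; positivity
  · have h2 : v.2 ≠ 0 := fun h2 => hv (Prod.ext h h2)
    have := pow_pos (norm_pos_iff.mpr h2) 2
    unfold euclidNormSq; positivity

theorem inv_sqrt_euclidNormSq_pos {v : 𝕜 × 𝕜} (hv : v ≠ 0) : 0 < (√(euclidNormSq v))⁻¹ :=
  inv_pos.mpr (Real.sqrt_pos.mpr (euclidNormSq_pos hv))

theorem euclidNormSq_euclidNormalize {v : 𝕜 × 𝕜} (hv : v ≠ 0) :
    euclidNormSq (euclidNormalize v) = 1 := by
  have hpos := euclidNormSq_pos hv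
  rw [euclidNormalize, euclidNormSq_smul, inv_pow, Real.sq_sqrt hpos.le, inv_mul_cancel₀ hpos.ne']

theorem euclidNormalize_zero : euclidNormalize (0 : 𝕜 × 𝕜) = 0 := smul_zero _

theorem euclidNormalize_smul {r : ℝ} (hr : 0 < r) (v : 𝕜 × 𝕜) :
    euclidNormalize (r • v) = euclidNormalize v := by
  rw [euclidNormalize, euclidNormalize, euclidNormSq_smul, Real.sqrt_mul (sq_nonneg r),
    Real.sqrt_sq hr.le, mul_inv_rev, smul_smul, inv_mul_cancel_right₀ hr.ne']

theorem euclidNormalize_of_euclidNormSq_eq_one {v : 𝕜 × 𝕜} (hv : euclidNormSq v = 1) :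
    euclidNormalize v = v := by
  rw [euclidNormalize, hv, Real.sqrt_one, inv_one, one_smul]

theorem euclidNormalize_mul_left (v w : 𝕜 × 𝕜) :
    euclidNormalize (euclidNormalize v * w) = euclidNormalize (v * w) := by
  rcases eq_or_ne v 0 with rfl | hv
  · simp only [euclidNormalize_zero, zero_mul]
  · rw [euclidNormalize.eq_1 v, smul_mul_assoc,
      euclidNormalize_smul (inv_sqrt_euclidNormSq_pos hv)]

theorem euclidNormalize_mul_right (v w : 𝕜 × 𝕜) :
    euclidNormalize (v * euclidNormalize w) = euclidNormalize (v * w) := by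
  rw [mul_comm, euclidNormalize_mul_left, mul_comm]

end Prod

open Prod ComplexConjugate

theorem bop_eq_euclidNormalize_mul (z w : ℂ × ℂ) : bop z w = euclidNormalize (z * w) := by
  ext <;> simp only [bop, euclidNormalize, euclidNormSq, fst_mul, snd_mul, smul_fst, smul_snd,
    norm_mul, mul_pow, Complex.real_smul, Complex.ofReal_inv, div_eq_inv_mul]

theorem irrD_euclidNormalize {v : ℂ × ℂ} (h1 : v.1 ≠ 0) (h2 : v.2 ≠ 0) :
    IrrD (euclidNormalize v) := by
  have hv : v ≠ 0 := ne_of_apply_ne fst h1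
  have hc := (inv_sqrt_euclidNormSq_pos hv).ne'
  exact ⟨euclidNormSq_euclidNormalize hv, smul_ne_zero hc h1, smul_ne_zero hc h2⟩

theorem euclidNormalize_one :
    euclidNormalize (1 : ℂ × ℂ) = (((1 / √2 : ℝ) : ℂ), ((1 / √2 : ℝ) : ℂ)) := by
  have h : euclidNormSq (1 : ℂ × ℂ) = 2 := by norm_num [euclidNormSq]
  ext <;> simp [euclidNormalize, h, Complex.real_smul]

theorem norm_ofReal_norm_mul_conj_div {x : ℂ} (hx : x ≠ 0) (y : ℂ) :
    ‖(‖y‖ : ℂ) * conj x / (‖x‖ : ℂ)‖ = ‖y‖ := by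
  rw [norm_div, norm_mul, Complex.norm_conj, Complex.norm_real, Complex.norm_real, norm_norm,
    norm_norm, mul_div_cancel_right₀ _ (norm_ne_zero_iff.mpr hx)]

theorem mul_ofReal_norm_mul_conj_div (x y : ℂ) :
    x * ((‖y‖ : ℂ) * conj x / (‖x‖ : ℂ)) = ((‖x‖ * ‖y‖ : ℝ) : ℂ) := by
  rw [mul_div_assoc', mul_left_comm, Complex.mul_conj', sq, mul_div_assoc, mul_self_div_self]
  push_cast
  ring

theorem irrD_binv {z : ℂ × ℂ} (hz : IrrD z) : IrrD (binv z) := by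
  obtain ⟨hnorm, h1, h2⟩ := hz
  have hfst : ‖(binv z).1‖ = ‖z.2‖ := norm_ofReal_norm_mul_conj_div h1 z.2
  have hsnd : ‖(binv z).2‖ = ‖z.1‖ := norm_ofReal_norm_mul_conj_div h2 z.1
  refine ⟨?_, norm_ne_zero_iff.mp ?_, norm_ne_zero_iff.mp ?_⟩
  · rw [hfst, hsnd, add_comm, hnorm]
  · rw [hfst]; exact norm_ne_zero_iff.mpr h2
  · rw [hsnd]; exact norm_ne_zero_iff.mpr h1

theorem mul_binv (z : ℂ × ℂ) : z * binv z = (‖z.1‖ * ‖z.2‖) • (1 : ℂ × ℂ) := by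
  ext
  · simp [binv, mul_ofReal_norm_mul_conj_div, Complex.real_smul]
  · simp [binv, mul_ofReal_norm_mul_conj_div, Complex.real_smul, mul_comm]

theorem bop_assoc (z w u : ℂ × ℂ) : bop (bop z w) u = bop z (bop w u) := by
  simp only [bop_eq_euclidNormalize_mul, euclidNormalize_mul_left, euclidNormalize_mul_right,
    mul_assoc]

theorem bop_comm (z w : ℂ × ℂ) : bop z w = bop w z := by
  rw [bop_eq_euclidNormalize_mul, bop_eq_euclidNormalize_mul, mul_comm]

/-- `Irr_diff(1)` with `⊠` is an abelian group with identity `(1/√2, 1/√2)`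
and inverse `(a,b)⁻¹ = (|b|e^{-i Arg a}, |a|e^{-i Arg b})`. -/
theorem stmt_18 :
    (∀ z w, IrrD z → IrrD w → IrrD (bop z w)) ∧
    (∀ z w u, IrrD z → IrrD w → IrrD u → bop (bop z w) u = bop z (bop w u)) ∧
    (∀ z w, IrrD z → IrrD w → bop z w = bop w z) ∧
    IrrD (((1 / Real.sqrt 2 : ℝ) : ℂ), ((1 / Real.sqrt 2 : ℝ) : ℂ)) ∧
    (∀ z, IrrD z →
      bop z (((1 / Real.sqrt 2 : ℝ) : ℂ), ((1 / Real.sqrt 2 : ℝ) : ℂ)) = z) ∧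
    (∀ z, IrrD z → IrrD (binv z) ∧
      bop z (binv z) = (((1 / Real.sqrt 2 : ℝ) : ℂ), ((1 / Real.sqrt 2 : ℝ) : ℂ))) := by
  rw [← euclidNormalize_one]
  refine ⟨fun z w hz hw => ?_, fun z w u _ _ _ => bop_assoc z w u, fun z w _ _ => bop_comm z w,
    irrD_euclidNormalize one_ne_zero one_ne_zero, fun z hz => ?_, fun z hz => ⟨irrD_binv hz, ?_⟩⟩
  · rw [bop_eq_euclidNormalize_mul]
    exact irrD_euclidNormalize (mul_ne_zero hz.2.1 hw.2.1) (mul_ne_zero hz.2.2 hw.2.2)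
  · rw [bop_eq_euclidNormalize_mul, euclidNormalize_mul_right, mul_one,
      euclidNormalize_of_euclidNormSq_eq_one hz.1]
  · have hpos : 0 < ‖z.1‖ * ‖z.2‖ := mul_pos (norm_pos_iff.mpr hz.2.1) (norm_pos_iff.mpr hz.2.2)
    rw [bop_eq_euclidNormalize_mul, mul_binv, euclidNormalize_smul hpos]
end

section
/- The map S¹ × S¹ × ℝ → Irr_diff(1), (u,v,t) ↦ (u/√(eᵗ+1), v·√(eᵗ/(eᵗ+1))), is a group isomorphism from the direct product group S¹ × S¹ × (ℝ,+) onto (Irr_diff(1), ⊠). -/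
/-- The map `(u,v,t) ↦ (u/√(eᵗ+1), v·√(eᵗ/(eᵗ+1)))`. -/
noncomputable def phi (x : Circle × Circle × ℝ) : ℂ × ℂ :=
  ((x.1 : ℂ) / (Real.sqrt (Real.exp x.2.2 + 1) : ℝ),
   (x.2.1 : ℂ) * (Real.sqrt (Real.exp x.2.2 / (Real.exp x.2.2 + 1)) : ℝ))

noncomputable def pairNormSq (z : ℂ × ℂ) : ℝ := ‖z.1‖ ^ 2 + ‖z.2‖ ^ 2

noncomputable def pairNormalize (z : ℂ × ℂ) : ℂ × ℂ := (√(pairNormSq z))⁻¹ • z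

lemma pairNormSq_pos {z : ℂ × ℂ} (hz : z ≠ 0) : 0 < pairNormSq z := by
  have h : z.1 ≠ 0 ∨ z.2 ≠ 0 := by
    contrapose! hz
    exact Prod.ext hz.1 hz.2
  rcases h with h | h <;> have := norm_pos_iff.2 h <;> unfold pairNormSq <;> positivity

lemma pairNormSq_smul (c : ℝ) (z : ℂ × ℂ) : pairNormSq (c • z) = c ^ 2 * pairNormSq z := by
  simp only [pairNormSq, Prod.smul_fst, Prod.smul_snd, norm_smul, Real.norm_eq_abs, mul_pow, sq_abs]
  ring

lemma pairNormalize_smul {c : ℝ} (hc : 0 < c) (z : ℂ × ℂ) :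
    pairNormalize (c • z) = pairNormalize z := by
  rw [pairNormalize, pairNormalize, pairNormSq_smul, Real.sqrt_mul (sq_nonneg c),
    Real.sqrt_sq hc.le, smul_smul, mul_inv, mul_right_comm, inv_mul_cancel₀ hc.ne', one_mul]

lemma pairNormSq_pairNormalize {z : ℂ × ℂ} (hz : z ≠ 0) :
    pairNormSq (pairNormalize z) = 1 := by
  rw [pairNormalize, pairNormSq_smul, inv_pow, Real.sq_sqrt (pairNormSq_pos hz).le,
    inv_mul_cancel₀ (pairNormSq_pos hz).ne']

lemma pairNormalize_of_pairNormSq_eq_one {z : ℂ × ℂ} (hz : pairNormSq z = 1) :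
    pairNormalize z = z := by
  rw [pairNormalize, hz, Real.sqrt_one, inv_one, one_smul]

lemma pairNormalize_mul_pairNormalize {z w : ℂ × ℂ} (hz : z ≠ 0) (hw : w ≠ 0) :
    pairNormalize (pairNormalize z * pairNormalize w) = pairNormalize (z * w) := by
  have hprod : pairNormalize z * pairNormalize w =
      ((√(pairNormSq z))⁻¹ * (√(pairNormSq w))⁻¹) • (z * w) :=
    smul_mul_smul_comm _ _ _ _
  have hz' := pairNormSq_pos hz
  have hw' := pairNormSq_pos hw
  rw [hprod]
  exact pairNormalize_smul (by positivity) _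

lemma bop_eq_pairNormalize_mul (z w : ℂ × ℂ) : bop z w = pairNormalize (z * w) := by
  have hk : ‖z.1‖ ^ 2 * ‖w.1‖ ^ 2 + ‖z.2‖ ^ 2 * ‖w.2‖ ^ 2 = pairNormSq (z * w) := by
    simp only [pairNormSq, Prod.fst_mul, Prod.snd_mul, norm_mul, mul_pow]
  ext <;> simp [bop, pairNormalize, hk, Complex.real_smul, div_eq_inv_mul]

lemma irrD_pairNormalize {z : ℂ × ℂ} (h1 : z.1 ≠ 0) (h2 : z.2 ≠ 0) :
    IrrD (pairNormalize z) := by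
  have hz : z ≠ 0 := fun h => h1 (by simp [h])
  have hk : (√(pairNormSq z))⁻¹ ≠ 0 := inv_ne_zero (Real.sqrt_pos.2 (pairNormSq_pos hz)).ne'
  exact ⟨pairNormSq_pairNormalize hz, smul_ne_zero hk h1, smul_ne_zero hk h2⟩

lemma norm_snd_div_norm_fst_pairNormalize (z : ℂ × ℂ) :
    ‖(pairNormalize z).2‖ / ‖(pairNormalize z).1‖ = ‖z.2‖ / ‖z.1‖ := by
  by_cases hz : z = 0
  · simp [hz, pairNormalize]
  have hk : ‖(√(pairNormSq z))⁻¹‖ ≠ 0 := by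
    simpa using (Real.sqrt_pos.2 (pairNormSq_pos hz)).ne'
  simp only [pairNormalize, Prod.smul_fst, Prod.smul_snd, norm_smul]
  exact mul_div_mul_left _ _ hk

noncomputable def phiUnnormalized (x : Circle × Circle × ℝ) : ℂ × ℂ :=
  (x.1, x.2.1 * (Real.exp (x.2.2 / 2) : ℝ))

lemma phiUnnormalized_ne_zero (x : Circle × Circle × ℝ) : phiUnnormalized x ≠ 0 :=
  fun h => x.1.coe_ne_zero (congrArg Prod.fst h)

lemma phiUnnormalized_mul (u u' v v' : Circle) (t t' : ℝ) :
    phiUnnormalized (u * u', v * v', t + t') =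
      phiUnnormalized (u, v, t) * phiUnnormalized (u', v', t') := by
  ext
  · simp [phiUnnormalized]
  · simp only [phiUnnormalized, Prod.snd_mul, Circle.coe_mul, add_div, Real.exp_add,
      Complex.ofReal_mul]
    ring

lemma pairNormSq_phiUnnormalized (x : Circle × Circle × ℝ) :
    pairNormSq (phiUnnormalized x) = Real.exp x.2.2 + 1 := by
  simp only [pairNormSq, phiUnnormalized, norm_mul, Circle.norm_coe, Complex.norm_real,
    Real.norm_eq_abs, mul_pow, Real.exp_half, sq_abs, Real.sq_sqrt (Real.exp_pos _).le]
  ring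

lemma norm_snd_div_norm_fst_phiUnnormalized (x : Circle × Circle × ℝ) :
    ‖(phiUnnormalized x).2‖ / ‖(phiUnnormalized x).1‖ = Real.exp (x.2.2 / 2) := by
  simp only [phiUnnormalized, norm_mul, Circle.norm_coe, Complex.norm_real, Real.norm_eq_abs,
    abs_of_pos (Real.exp_pos _), one_mul, div_one]

lemma phi_eq_pairNormalize (x : Circle × Circle × ℝ) :
    phi x = pairNormalize (phiUnnormalized x) := by
  rcases x with ⟨u, v, t⟩
  rw [pairNormalize, pairNormSq_phiUnnormalized]
  ext
  · simp [phi, phiUnnormalized, Complex.real_smul, div_eq_inv_mul]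
  · simp only [phi, phiUnnormalized, Prod.smul_mk, Complex.real_smul, Complex.ofReal_inv,
      Complex.ofReal_div, Real.exp_half, Real.sqrt_div (Real.exp_pos t).le]
    ring

lemma irrD_phi (x : Circle × Circle × ℝ) : IrrD (phi x) := by
  rw [phi_eq_pairNormalize]
  exact irrD_pairNormalize x.1.coe_ne_zero (mul_ne_zero x.2.1.coe_ne_zero (by simp))

lemma phi_injective : Function.Injective phi := by
  rintro ⟨u, v, t⟩ ⟨u', v', t'⟩ h
  obtain rfl : t = t' := by
    have := congrArg (fun z : ℂ × ℂ => ‖z.2‖ / ‖z.1‖) h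
    simp only [phi_eq_pairNormalize, norm_snd_div_norm_fst_pairNormalize,
      norm_snd_div_norm_fst_phiUnnormalized] at this
    linarith [Real.exp_injective this]
  have hr : ((√(Real.exp t + 1) : ℝ) : ℂ) ≠ 0 := Complex.ofReal_ne_zero.2 (by positivity)
  have hs : ((√(Real.exp t / (Real.exp t + 1)) : ℝ) : ℂ) ≠ 0 :=
    Complex.ofReal_ne_zero.2 (by positivity)
  obtain ⟨hu, hv⟩ := Prod.ext_iff.1 h
  simp only [phi, div_left_inj' hr, mul_left_inj' hs] at hu hv
  rw [Circle.ext hu, Circle.ext hv]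

lemma exists_phi_eq {z : ℂ × ℂ} (hz : IrrD z) : ∃ x, phi x = z := by
  rcases z with ⟨a, b⟩
  obtain ⟨hsum, ha, hb⟩ := hz
  have hna : 0 < ‖a‖ := norm_pos_iff.2 ha
  have hnb : 0 < ‖b‖ := norm_pos_iff.2 hb
  refine ⟨(Circle.exp (Complex.arg a), Circle.exp (Complex.arg b), 2 * Real.log (‖b‖ / ‖a‖)), ?_⟩
  have hpolar : phiUnnormalized (Circle.exp (Complex.arg a), Circle.exp (Complex.arg b),
      2 * Real.log (‖b‖ / ‖a‖)) = ‖a‖⁻¹ • (a, b) := by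
    have hexp : Real.exp (2 * Real.log (‖b‖ / ‖a‖) / 2) = ‖b‖ / ‖a‖ := by
      rw [mul_div_cancel_left₀ _ two_ne_zero, Real.exp_log (by positivity)]
    have hca : (‖a‖ : ℂ) ≠ 0 := Complex.ofReal_ne_zero.2 hna.ne'
    ext
    · simp only [phiUnnormalized, Prod.smul_fst, Circle.coe_exp, Complex.real_smul,
        Complex.ofReal_inv]
      rw [eq_inv_mul_iff_mul_eq₀ hca, Complex.norm_mul_exp_arg_mul_I]
    · simp only [phiUnnormalized, Prod.smul_snd, Circle.coe_exp, Complex.real_smul,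
        Complex.ofReal_inv, hexp, Complex.ofReal_div]
      conv_rhs => rw [← Complex.norm_mul_exp_arg_mul_I b]
      field_simp
  rw [phi_eq_pairNormalize, hpolar, pairNormalize_smul (inv_pos.2 hna),
    pairNormalize_of_pairNormSq_eq_one hsum]

lemma phi_mul (u u' v v' : Circle) (t t' : ℝ) :
    phi (u * u', v * v', t + t') = bop (phi (u, v, t)) (phi (u', v', t')) := by
  rw [bop_eq_pairNormalize_mul, phi_eq_pairNormalize, phi_eq_pairNormalize,
    phi_eq_pairNormalize,
    pairNormalize_mul_pairNormalize (phiUnnormalized_ne_zero _) (phiUnnormalized_ne_zero _),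
    phiUnnormalized_mul]

/-- The map `S¹ × S¹ × ℝ → Irr_diff(1)`, `(u,v,t) ↦ (u/√(eᵗ+1), v√(eᵗ/(eᵗ+1)))`,
is a group isomorphism from `S¹ × S¹ × (ℝ,+)` onto `(Irr_diff(1), ⊠)`: it lands
in `Irr_diff(1)`, is injective, surjective onto `Irr_diff(1)`, and multiplicative. -/
theorem stmt_19 :
    (∀ x : Circle × Circle × ℝ, IrrD (phi x)) ∧
    Function.Injective phi ∧
    (∀ z : ℂ × ℂ, IrrD z → ∃ x : Circle × Circle × ℝ, phi x = z) ∧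
    (∀ u u' v v' : Circle, ∀ t t' : ℝ,
      phi (u * u', v * v', t + t') = bop (phi (u, v, t)) (phi (u', v', t'))) :=
  ⟨irrD_phi, phi_injective, fun _ => exists_phi_eq, phi_mul⟩
end
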